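/- arXiv:1808.10074 — 3 statements merged into one kernel-verified Lean document; each statement's English description precedes it below -/
import Mathlib

section
/- Let m ≥ 4 and p ≥ 3 be integers and let G be a finite simple graph whose vertex set is partitioned into p parts V_1, …, V_p, each of size q, such that: (i) each induced subgraph G[V_i] is m-regular and m-connected; (ii) every vertex of V_i has exactly two neighbours of G outside V_i ('outside neighbours'), and these two outside neighbours lie in two distinct parts other than V_i; (iii) for any two distinct parts V_i and V_j the number of edges of G between V_i and V_j equals 2q/(p−1), and 2q/(p−1) ≥ m + 2. Then for every l with 2 ≤ l ≤ p − 1 and every choice of l parts, the subgraph H of G induced on the union of these l parts has vertex connectivity κ(H) ≥ m. -/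
/-- A graph `G` is `k`-connected if it has more than `k` vertices and removing any set of
fewer than `k` vertices leaves a connected graph (equivalently, `κ(G) ≥ k`). -/
def IsKConnected {V : Type*} [Fintype V] (k : ℕ) (G : SimpleGraph V) : Prop :=
  k < Fintype.card V ∧ ∀ D : Set V, D.ncard < k → (G.induce Dᶜ).Connected

/-- The vertex connectivity `κ(G)` of a finite graph `G`. -/
noncomputable def vertexConnectivity {V : Type*} [Fintype V] (G : SimpleGraph V) : ℕ :=
  sSup {k | IsKConnected k G}

/-- for a graph `G` partitioned into `p` parts of size `q` satisfying
(i) each part induces an `m`-regular, `m`-connected subgraph; (ii) each vertex has exactly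
two outside neighbours, lying in two distinct other parts; (iii) between any two distinct
parts there are exactly `2q/(p-1) ≥ m + 2` edges; the subgraph induced on the union of any
`l` parts (`2 ≤ l ≤ p - 1`) has vertex connectivity at least `m`. -/
theorem stmt_0 {V : Type*} [Fintype V] (G : SimpleGraph V)
    (p q m : ℕ) (hm : 4 ≤ m) (hp : 3 ≤ p)
    (part : V → Fin p)
    (hsize : ∀ i : Fin p, {v : V | part v = i}.ncard = q)
    (hreg : ∀ v : V, {w : V | G.Adj v w ∧ part w = part v}.ncard = m)
    (hconn : ∀ i : Fin p, IsKConnected m (G.induce {v : V | part v = i}))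
    (hout : ∀ v : V, ∃ w₁ w₂ : V, w₁ ≠ w₂ ∧ G.Adj v w₁ ∧ G.Adj v w₂ ∧
      part w₁ ≠ part v ∧ part w₂ ≠ part v ∧ part w₁ ≠ part w₂ ∧
      (∀ w : V, G.Adj v w → part w ≠ part v → w = w₁ ∨ w = w₂))
    (hcross : ∀ i j : Fin p, i ≠ j →
      {e : V × V | G.Adj e.1 e.2 ∧ part e.1 = i ∧ part e.2 = j}.ncard * (p - 1) = 2 * q ∧
      m + 2 ≤ {e : V × V | G.Adj e.1 e.2 ∧ part e.1 = i ∧ part e.2 = j}.ncard) :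
    ∀ (l : ℕ) (I : Finset (Fin p)), 2 ≤ l → l ≤ p - 1 → I.card = l →
      m ≤ vertexConnectivity (G.induce {v : V | part v ∈ I}) := by
  classical
  intro l I hl2 hlp hIl
  -- matching lemma: a vertex has at most one neighbour in any single other part
  have matchLem : ∀ v w w' : V, G.Adj v w → G.Adj v w' → part w ≠ part v →
      part w' = part w → w = w' := by
    intro v w w' hvw hvw' hwv hww'
    obtain ⟨w₁, w₂, h12, _, _, hp1, hp2, hpd, huniq⟩ := hout v
    have hw := huniq w hvw hwv
    have hw' := huniq w' hvw' (by rw [hww']; exact hwv)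
    rcases hw with rfl | rfl <;> rcases hw' with rfl | rfl
    · rfl
    · exact absurd hww'.symm hpd
    · exact absurd hww' hpd
    · rfl
  have cardNcard : ∀ (s : Set V) (inst : Fintype ↥s), @Fintype.card ↥s inst = s.ncard := by
    intro s inst
    rw [← Nat.card_eq_fintype_card, Nat.card_coe_set_eq]
  set S : Set V := {v : V | part v ∈ I} with hSdef
  have hInonempty : I.Nonempty := Finset.card_pos.mp (by omega)
  obtain ⟨i0, hi0⟩ := hInonempty
  have hmq : m < q := by
    have h := (hconn i0).1
    rwa [cardNcard, hsize] at h
  have hPS : {v : V | part v = i0} ⊆ S := by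
    intro v hv
    have hv' : part v = i0 := hv
    show part v ∈ I
    rw [hv']
    exact hi0
  have hScard : m < Fintype.card ↥S := by
    rw [cardNcard]
    calc m < q := hmq
      _ = {v : V | part v = i0}.ncard := (hsize i0).symm
      _ ≤ S.ncard := Set.ncard_le_ncard hPS (Set.toFinite S)
  have hmem : IsKConnected m (G.induce S) := by
    refine ⟨hScard, ?_⟩
    intro D hD
    set D' : Set V := Subtype.val '' D with hD'def
    have hD' : D'.ncard < m := by
      rw [hD'def, Set.ncard_image_of_injective D Subtype.val_injective]
      exact hD
    have memD' : ∀ (x : ↥S), x ∈ D ↔ (x : V) ∈ D' := by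
      intro x
      constructor
      · exact fun h => ⟨x, h, rfl⟩
      · rintro ⟨y, hy, hxy⟩
        have : y = x := Subtype.ext hxy
        rwa [← this]
    have exists_avoid : ∀ i ∈ I, ∃ v : V, part v = i ∧ v ∉ D' := by
      intro i hi
      by_contra h
      push_neg at h
      have hsub : {v : V | part v = i} ⊆ D' := fun v hv => h v hv
      have hle := Set.ncard_le_ncard hsub (Set.toFinite D')
      rw [hsize] at hle
      omega
    -- same-part reachability
    have reach_same : ∀ (a b : ↥((Dᶜ : Set ↥S))), part ((a : ↥S) : V) = part ((b : ↥S) : V) →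
        ((G.induce S).induce (Dᶜ : Set ↥S)).Reachable a b := by
      intro a b hab
      set i := part ((a : ↥S) : V) with hidef
      have hiI : i ∈ I := (a : ↥S).2
      set Pi : Set V := {v : V | part v = i} with hPidef
      set Di : Set ↥Pi := {x : ↥Pi | (x : V) ∈ D'} with hDidef
      have hDi : Di.ncard < m := by
        refine lt_of_le_of_lt ?_ hD'
        rw [← Set.ncard_image_of_injective Di Subtype.val_injective]
        refine Set.ncard_le_ncard ?_ (Set.toFinite D')
        rintro v ⟨x, hx, rfl⟩
        exact hx
      have hc := (hconn i).2 Di hDi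
      have hSPi : ∀ x : ↥Pi, (x : V) ∈ S := by
        intro x
        have hx : part (x : V) = i := x.2
        show part (x : V) ∈ I
        rw [hx]
        exact hiI
      let ψ : ((G.induce Pi).induce (Diᶜ : Set ↥Pi)) →g ((G.induce S).induce (Dᶜ : Set ↥S)) :=
        { toFun := fun x => ⟨⟨((x : ↥Pi) : V), hSPi (x : ↥Pi)⟩, by
            have hx : ((x : ↥Pi) : V) ∉ D' := x.2
            intro hmem
            exact hx ((memD' _).mp hmem)⟩
          map_rel' := fun h => h }
      have ha' : ((a : ↥S) : V) ∈ Pi := rfl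
      have hb' : ((b : ↥S) : V) ∈ Pi := hab.symm
      have haD : ((a : ↥S) : V) ∉ D' := fun h => a.2 ((memD' _).mpr h)
      have hbD : ((b : ↥S) : V) ∉ D' := fun h => b.2 ((memD' _).mpr h)
      let a' : ↥((Diᶜ : Set ↥Pi)) := ⟨⟨((a : ↥S) : V), ha'⟩, haD⟩
      let b' : ↥((Diᶜ : Set ↥Pi)) := ⟨⟨((b : ↥S) : V), hb'⟩, hbD⟩
      have key := SimpleGraph.Reachable.map ψ (hc.preconnected a' b')
      have e1 : ψ a' = a := Subtype.ext (Subtype.ext rfl)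
      have e2 : ψ b' = b := Subtype.ext (Subtype.ext rfl)
      rwa [e1, e2] at key
    -- surviving cross edge between any two distinct parts of I
    have cross : ∀ i j : Fin p, i ∈ I → j ∈ I → i ≠ j →
        ∃ e : V × V, G.Adj e.1 e.2 ∧ part e.1 = i ∧ part e.2 = j ∧ e.1 ∉ D' ∧ e.2 ∉ D' := by
      intro i j hi hj hij
      set E : Set (V × V) := {e : V × V | G.Adj e.1 e.2 ∧ part e.1 = i ∧ part e.2 = j} with hEdef
      have hE : m + 2 ≤ E.ncard := (hcross i j hij).2
      set Bad : Set (V × V) := {e ∈ E | e.1 ∈ D' ∨ e.2 ∈ D'} with hBaddef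
      have hBad : Bad.ncard ≤ D'.ncard := by
        apply Set.ncard_le_ncard_of_injOn (fun e => if e.1 ∈ D' then e.1 else e.2)
        · rintro e ⟨he, hor⟩
          show (if e.1 ∈ D' then e.1 else e.2) ∈ D'
          split_ifs with h
          · exact h
          · tauto
        · rintro e ⟨⟨hadj, hp1, hp2⟩, _⟩ e' ⟨⟨hadj', hp1', hp2'⟩, _⟩ hfe
          simp only at hfe
          have hji : part e.2 ≠ part e.1 := by rw [hp1, hp2]; exact fun h => hij h.symm
          split_ifs at hfe with h1 h2 h2
          · -- e.1 = e'.1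
            have h2eq : e.2 = e'.2 :=
              matchLem e.1 e.2 e'.2 hadj (by rw [hfe]; exact hadj') hji (by rw [hp2', hp2])
            exact Prod.ext hfe h2eq
          · exact absurd (by rw [← hp1, hfe, hp2'] : i = j) hij
          · exact absurd (by rw [← hp2, hfe, hp1'] : i = j) hij
          · -- e.2 = e'.2
            have h1eq : e.1 = e'.1 :=
              matchLem e.2 e.1 e'.1 hadj.symm (by rw [hfe]; exact hadj'.symm)
                (by rw [hp1, hp2]; exact hij) (by rw [hp1', hp1])
            exact Prod.ext h1eq hfe
      have hnsub : ¬ (E ⊆ Bad) := by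
        intro hsub
        have := Set.ncard_le_ncard hsub (Set.toFinite Bad)
        omega
      obtain ⟨e, heE, heBad⟩ := Set.not_subset.mp hnsub
      obtain ⟨hadj, hp1, hp2⟩ := heE
      exact ⟨e, hadj, hp1, hp2,
        fun h => heBad ⟨⟨hadj, hp1, hp2⟩, Or.inl h⟩,
        fun h => heBad ⟨⟨hadj, hp1, hp2⟩, Or.inr h⟩⟩
    rw [SimpleGraph.connected_iff]
    constructor
    · intro a b
      by_cases hab : part ((a : ↥S) : V) = part ((b : ↥S) : V)
      · exact reach_same a b hab
      · have hiI : part ((a : ↥S) : V) ∈ I := (a : ↥S).2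
        have hjI : part ((b : ↥S) : V) ∈ I := (b : ↥S).2
        obtain ⟨e, hadj, hp1, hp2, h1D, h2D⟩ := cross _ _ hiI hjI hab
        have h1S : e.1 ∈ S := by show part e.1 ∈ I; rw [hp1]; exact hiI
        have h2S : e.2 ∈ S := by show part e.2 ∈ I; rw [hp2]; exact hjI
        let x : ↥((Dᶜ : Set ↥S)) := ⟨⟨e.1, h1S⟩, fun h => h1D ((memD' _).mp h)⟩
        let y : ↥((Dᶜ : Set ↥S)) := ⟨⟨e.2, h2S⟩, fun h => h2D ((memD' _).mp h)⟩
        have hxy : ((G.induce S).induce (Dᶜ : Set ↥S)).Adj x y := hadj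
        exact (reach_same a x hp1.symm).trans (hxy.reachable.trans (reach_same y b hp2))
    · obtain ⟨v, hv, hvD⟩ := exists_avoid i0 hi0
      have hvS : v ∈ S := by show part v ∈ I; rw [hv]; exact hi0
      exact ⟨⟨⟨v, hvS⟩, fun h => hvD ((memD' _).mp h)⟩⟩
  exact le_csSup ⟨Fintype.card ↥S, fun k hk => le_of_lt hk.1⟩ hmem
end

section
/- Let m ≥ 4 and p ≥ 3 be integers and let G be a finite simple graph whose vertex set is partitioned into p parts V_1, …, V_p, each of size q, such that: (i) each induced subgraph G[V_i] is m-regular and m-connected; (ii) every vertex of V_i has exactly two neighbours of G outside V_i ('outside neighbours'), and these two outside neighbours lie in two distinct parts other than V_i; (iii) for any two distinct parts V_i and V_j the number of edges of G between V_i and V_j equals 2q/(p−1), and 2q/(p−1) ≥ m + 2. Let H be the subgraph of G induced on the union of l ≥ 2 of the parts, let x ∈ V(H) with degree d_H(x) = k in H, and let Y ⊆ V(H) \ {x} with |Y| = k such that |Y ∩ V_j| ≤ m for each part V_j contained in H. Then there exists a k-fan in H from x to Y. -/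
/-- A `k`-fan in `G` from `x` to `Y`: a family of `k` internally disjoint paths from `x`
ending at `k` distinct vertices of `Y`, none of whose internal vertices lies in `Y ∪ {x}`. -/
def IsFan {V : Type*} (G : SimpleGraph V) (k : ℕ) (x : V) (Y : Set V) : Prop :=
  ∃ (y : Fin k → V) (P : ∀ i : Fin k, G.Walk x (y i)),
    Function.Injective y ∧ (∀ i, y i ∈ Y) ∧ (∀ i, (P i).IsPath) ∧
    (∀ i, ∀ v ∈ (P i).support, v ≠ x → v ≠ y i → v ∉ Y) ∧
    (∀ i j, i ≠ j → ∀ v, v ∈ (P i).support → v ∈ (P j).support → v = x)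

namespace Function

variable {V : Type*} [DecidableEq V] {x y : V}

lemma update_id_ne (hxy : x ≠ y) (u : V) : update id y x u ≠ y := by
  by_cases hu : u = y
  · simpa [hu] using hxy
  · simpa [update_of_ne hu] using hu

lemma preimage_update_id_subset_insert (S : Set V) : update id y x ⁻¹' S ⊆ insert y S := by
  intro v hv
  by_cases hvy : v = y
  · exact Or.inl hvy
  · exact Or.inr (by simpa [update_of_ne hvy] using hv)

lemma preimage_update_id_subset {S : Set V} (hx : x ∉ S) : update id y x ⁻¹' S ⊆ S := by
  intro v hv
  by_cases hvy : v = y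
  · subst hvy
    exact absurd (by simpa using hv) hx
  · simpa [update_of_ne hvy] using hv

end Function

namespace SimpleGraph

variable {V : Type*} {G : SimpleGraph V}

def Separates (G : SimpleGraph V) (A B S : Set V) : Prop :=
  ∀ a ∈ A, ∀ b ∈ B, ∀ w : G.Walk a b, ∃ s ∈ S, s ∈ w.support

lemma Separates.symm {A B S : Set V} (h : G.Separates A B S) : G.Separates B A S :=
  fun b hb a ha w => by simpa using h a ha b hb w.reverse

lemma Separates.anti {G' : SimpleGraph V} (hle : G' ≤ G) {A B S : Set V}
    (h : G.Separates A B S) : G'.Separates A B S :=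
  fun a ha b hb w => by simpa using h a ha b hb (w.mapLe hle)

structure Linkage (G : SimpleGraph V) (A B : Set V) (k : ℕ) where
  src : Fin k → V
  dst : Fin k → V
  walk : ∀ i, G.Walk (src i) (dst i)
  src_mem : ∀ i, src i ∈ A
  dst_mem : ∀ i, dst i ∈ B
  pairwise_disjoint : Pairwise fun i j => (walk i).support.Disjoint (walk j).support

namespace Linkage

variable {A B : Set V} {k : ℕ}

lemma dst_injective (L : G.Linkage A B k) : Function.Injective L.dst := by
  intro i j hij
  by_contra hne
  refine L.pairwise_disjoint hne (L.walk i).end_mem_support ?_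
  rw [hij]
  exact (L.walk j).end_mem_support

def mapLe {G' : SimpleGraph V} (hle : G ≤ G') (L : G.Linkage A B k) : G'.Linkage A B k where
  src := L.src
  dst := L.dst
  walk i := (L.walk i).mapLe hle
  src_mem := L.src_mem
  dst_mem := L.dst_mem
  pairwise_disjoint i j hij := by simpa using L.pairwise_disjoint hij

def IsTight (L : G.Linkage A B k) : Prop :=
  ∀ i, (L.walk i).IsPath ∧ ∀ v ∈ (L.walk i).support, v ∈ B → v = L.dst i

end Linkage

lemma Walk.exists_isPath_to_first_mem {S : Set V} {a b : V} (w : G.Walk a b)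
    (h : ∃ s ∈ S, s ∈ w.support) :
    ∃ s ∈ S, ∃ p : G.Walk a s, p.IsPath ∧ p.support ⊆ w.support ∧
      ∀ v ∈ p.support, v ∈ S → v = s := by
  classical
  obtain ⟨s, hs, p, hsub, hfirst⟩ : ∃ s ∈ S, ∃ p : G.Walk a s,
      p.support ⊆ w.support ∧ ∀ v ∈ p.support, v ∈ S → v = s := by
    induction w with
    | nil =>
      obtain ⟨s, hs, hsa⟩ := h
      obtain rfl : s = _ := by simpa using hsa
      exact ⟨s, hs, .nil, by simp⟩
    | @cons u c v huc q ih =>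
      by_cases hu : u ∈ S
      · exact ⟨u, hu, .nil, by simp⟩
      obtain ⟨s, hs, p, hsub, hfirst⟩ := ih <| by
        obtain ⟨s, hs, rfl | hsq⟩ := by simpa using h
        exacts [absurd hs hu, ⟨s, hs, hsq⟩]
      refine ⟨s, hs, .cons huc p, ?_, ?_⟩
      · simpa using List.subset_cons_of_subset u hsub
      · simp only [Walk.support_cons, List.mem_cons, forall_eq_or_imp]
        exact ⟨fun h => absurd h hu, hfirst⟩
  exact ⟨s, hs, p.bypass, p.bypass_isPath, fun v hv => hsub (p.support_bypass_subset_support hv),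
    fun v hv => hfirst v (p.support_bypass_subset_support hv)⟩

lemma Linkage.exists_isTight {A B : Set V} {k : ℕ} (L : G.Linkage A B k) :
    ∃ L' : G.Linkage A B k, L'.IsTight := by
  choose dst dst_mem P hP hsub hfirst using fun i =>
    (L.walk i).exists_isPath_to_first_mem ⟨L.dst i, L.dst_mem i, (L.walk i).end_mem_support⟩
  exact ⟨⟨L.src, dst, P, L.src_mem, dst_mem,
    fun i j hij v hvi hvj => L.pairwise_disjoint hij (hsub i hvi) (hsub j hvj)⟩,
    fun i => ⟨hP i, hfirst i⟩⟩

lemma Walk.IsPath.notMem_of_mem_support_takeUntil [DecidableEq V] {X : Set V} {a b v : V}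
    {p : G.Walk a b} (hp : p.IsPath) (hX : ∀ s ∈ p.support, s ∈ X → s = b)
    (hv : v ∈ p.support) (hvX : v ∉ X) : ∀ s ∈ (p.takeUntil v hv).support, s ∉ X := by
  intro s hs hsX
  obtain rfl := hX s (p.support_takeUntil_subset_support hv hs) hsX
  exact Walk.endpoint_notMem_support_takeUntil hp hv (fun h => hvX (h ▸ hsX)) hs

/-- Both linkages end at all of `X`, as `|X| ≤ k`, and meet only in `X`, which separates `A` from
`B`; so they splice together. -/
lemma Separates.nonempty_linkage_of_isTight [Finite V] {A B X : Set V} {k : ℕ}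
    (hX : G.Separates A B X) (hXk : X.ncard ≤ k) {L : G.Linkage A X k} (hL : L.IsTight)
    {R : G.Linkage B X k} (hR : R.IsTight) : Nonempty (G.Linkage A B k) := by
  classical
  have hbij : ∀ {C : Set V} (M : G.Linkage C X k),
      Function.Bijective fun i => (⟨M.dst i, M.dst_mem i⟩ : X) := fun M =>
    Function.Injective.bijective_of_nat_card_le
      (fun i j hij => M.dst_injective (congrArg Subtype.val hij))
      (by simpa [Nat.card_coe_set_eq] using hXk)
  let σ : Fin k → Fin k := fun i => (Equiv.ofBijective _ (hbij R)).symm ⟨L.dst i, L.dst_mem i⟩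
  have hσ : ∀ i, R.dst (σ i) = L.dst i := fun i =>
    congrArg Subtype.val ((Equiv.ofBijective _ (hbij R)).apply_symm_apply _)
  have hσinj : σ.Injective := fun i j hij =>
    L.dst_injective (by rw [← hσ i, ← hσ j, hij])
  have hmeet : ∀ i j v, v ∈ (L.walk i).support → v ∈ (R.walk j).support → v ∈ X := by
    intro i j v hvi hvj
    by_contra hvX
    obtain ⟨s, hsX, hs⟩ := hX _ (L.src_mem i) _ (R.src_mem j)
      (((L.walk i).takeUntil v hvi).append ((R.walk j).takeUntil v hvj).reverse)
    rw [Walk.mem_support_append_iff, Walk.support_reverse, List.mem_reverse] at hs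
    rcases hs with hs | hs
    · exact (hL i).1.notMem_of_mem_support_takeUntil (hL i).2 hvi hvX s hs hsX
    · exact (hR j).1.notMem_of_mem_support_takeUntil (hR j).2 hvj hvX s hs hsX
  have hcross : ∀ i j v, v ∈ (L.walk i).support → v ∈ (R.walk (σ j)).support → i = j := by
    intro i j v hvi hvj
    have hvX := hmeet i (σ j) v hvi hvj
    exact L.dst_injective (by rw [← (hL i).2 v hvi hvX, (hR (σ j)).2 v hvj hvX, hσ])
  refine ⟨⟨L.src, fun i => R.src (σ i),
    fun i => (L.walk i).append ((R.walk (σ i)).reverse.copy (hσ i) rfl), L.src_mem,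
    fun i => R.src_mem (σ i), fun i j hij v hvi hvj => ?_⟩⟩
  simp only [Walk.mem_support_append_iff, Walk.support_copy, Walk.support_reverse,
    List.mem_reverse] at hvi hvj
  rcases hvi with hvi | hvi <;> rcases hvj with hvj | hvj
  · exact L.pairwise_disjoint hij hvi hvj
  · exact hij (hcross i j v hvi hvj)
  · exact hij (hcross j i v hvj hvi).symm
  · exact R.pairwise_disjoint (hσinj.ne hij) hvi hvj

lemma Walk.exists_walk_map {W : Type*} (f : V → W) {u v : V} (w : G.Walk u v) :
    ∃ w' : (G.map f).Walk (f u) (f v), w'.support ⊆ w.support.map f := by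
  classical
  induction w with
  | nil => exact ⟨.nil, by simp⟩
  | @cons u c v huc p ih =>
    obtain ⟨w', hw'⟩ := ih
    by_cases hfuc : f u = f c
    · exact ⟨w'.copy hfuc.symm rfl, by simpa using List.subset_cons_of_subset _ hw'⟩
    · exact ⟨.cons (map_adj_apply' huc hfuc) w', by simpa using List.subset_cons_of_subset _ hw'⟩

lemma Separates.of_map {W : Type*} (f : V → W) {A B : Set V} {S : Set W}
    (h : (G.map f).Separates (f '' A) (f '' B) S) : G.Separates A B (f ⁻¹' S) := by
  intro a ha b hb w
  obtain ⟨w', hw'⟩ := w.exists_walk_map f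
  obtain ⟨s, hs, hsw⟩ := h _ (Set.mem_image_of_mem f ha) _ (Set.mem_image_of_mem f hb) w'
  obtain ⟨t, ht, rfl⟩ := List.mem_map.mp (hw' hsw)
  exact ⟨t, hs, ht⟩

lemma Separates.of_deleteEdges {x y : V} (hxy : x ≠ y) {A B X T : Set V}
    (hX : G.Separates A B X) (hx : x ∈ X) (hy : y ∈ X)
    (hT : (G.deleteEdges {s(x, y)}).Separates A X T) : G.Separates A B T := by
  intro a ha b hb w
  obtain ⟨s, hs, p, -, hsub, hfirst⟩ := w.exists_isPath_to_first_mem (hX a ha b hb w)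
  have hp : ∀ e ∈ p.edges, e ∈ (G.deleteEdges {s(x, y)}).edgeSet := by
    intro e he
    rw [edgeSet_deleteEdges]
    refine ⟨p.edges_subset_edgeSet he, fun hexy => ?_⟩
    rw [Set.mem_singleton_iff] at hexy
    subst hexy
    exact hxy ((hfirst x (p.fst_mem_support_of_mem_edges he) hx).trans
      (hfirst y (p.snd_mem_support_of_mem_edges he) hy).symm)
  obtain ⟨t, ht, htp⟩ := hT a ha s hs (p.transfer _ hp)
  exact ⟨t, ht, hsub (by simpa using htp)⟩

section Contraction

/- `G.map (Function.update id y x)` is the contraction `G / xy`: `y` is merged into `x` and left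
isolated. -/

variable [DecidableEq V] {x y : V}

lemma ncard_edgeSet_map_update_lt [Finite V] (hxy : G.Adj x y) :
    (G.map (Function.update id y x)).edgeSet.ncard < G.edgeSet.ncard := by
  set c := Function.update id y x
  have hsub : (G.map c).edgeSet ⊆ Sym2.map c '' (G.edgeSet \ {s(x, y)}) := by
    intro e he
    induction e using Sym2.ind with
    | _ a b =>
    obtain ⟨hab, u, v, huv, rfl, rfl⟩ := he
    refine ⟨s(u, v), ⟨huv, ?_⟩, rfl⟩
    rintro h
    rcases Sym2.eq_iff.mp h with ⟨rfl, rfl⟩ | ⟨rfl, rfl⟩ <;>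
      simp [c, Function.update_of_ne hxy.ne] at hab
  calc (G.map c).edgeSet.ncard ≤ (Sym2.map c '' (G.edgeSet \ {s(x, y)})).ncard :=
        Set.ncard_le_ncard hsub (Set.toFinite _)
    _ ≤ (G.edgeSet \ {s(x, y)}).ncard := Set.ncard_image_le (Set.toFinite _)
    _ < G.edgeSet.ncard := Set.ncard_sdiff_singleton_lt_of_mem hxy (Set.toFinite _)

lemma exists_walk_update (hxy : G.Adj x y) (u : V) :
    ∃ p : G.Walk u (Function.update id y x u),
      ∀ v ∈ p.support, Function.update id y x v = Function.update id y x u := by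
  by_cases hu : u = y
  · subst hu
    exact ⟨(Walk.nil.cons hxy.symm).copy rfl (by simp), by simp [Function.update_of_ne hxy.ne]⟩
  · exact ⟨Walk.nil.copy rfl (by simp [Function.update_of_ne hu]), by simp⟩

lemma Walk.exists_lift_map_update (hxy : G.Adj x y) {a b : V}
    (w : (G.map (Function.update id y x)).Walk a b) (ha : a ≠ y) :
    ∃ w' : G.Walk a b, ∀ v ∈ w'.support, Function.update id y x v ∈ w.support := by
  induction w with
  | nil => exact ⟨.nil, by simp [Function.update_of_ne ha]⟩
  | @cons a c b hac p ih =>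
    obtain ⟨w', hw'⟩ := ih (by obtain ⟨-, u, v, -, -, rfl⟩ := hac; exact Function.update_id_ne hxy.ne v)
    obtain ⟨-, u, v, huv, rfl, rfl⟩ := hac
    obtain ⟨pu, hpu⟩ := exists_walk_update hxy u
    obtain ⟨pv, hpv⟩ := exists_walk_update hxy v
    refine ⟨pu.reverse.append ((pv.cons huv).append w'), fun t ht => ?_⟩
    simp only [Walk.mem_support_append_iff, Walk.support_reverse, List.mem_reverse,
      Walk.support_cons, List.mem_cons] at ht
    rcases ht with ht | (rfl | ht) | ht
    · simp [hpu t ht]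
    · simp
    · rw [hpv t ht]
      exact List.mem_cons_of_mem _ p.start_mem_support
    · exact List.mem_cons_of_mem _ (hw' t ht)

/-- Every vertex of a lifted walk maps into the walk it lifts, so lifts of disjoint walks stay
disjoint. -/
lemma Linkage.nonempty_of_map_update (hxy : G.Adj x y) {A B : Set V} {k : ℕ}
    (L : (G.map (Function.update id y x)).Linkage
      (Function.update id y x '' A) (Function.update id y x '' B) k) :
    Nonempty (G.Linkage A B k) := by
  have hlift : ∀ i, ∃ a ∈ A, ∃ b ∈ B, ∃ w : G.Walk a b,
      ∀ v ∈ w.support, Function.update id y x v ∈ (L.walk i).support := by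
    intro i
    obtain ⟨a, ha, hai⟩ := L.src_mem i
    obtain ⟨b, hb, hbi⟩ := L.dst_mem i
    obtain ⟨w, hw⟩ := (L.walk i).exists_lift_map_update hxy (hai ▸ Function.update_id_ne hxy.ne a)
    obtain ⟨pa, hpa⟩ := exists_walk_update hxy a
    obtain ⟨pb, hpb⟩ := exists_walk_update hxy b
    refine ⟨a, ha, b, hb, pa.append (((w.copy hai.symm hbi.symm)).append pb.reverse),
      fun v hv => ?_⟩
    simp only [Walk.mem_support_append_iff, Walk.support_copy, Walk.support_reverse,
      List.mem_reverse] at hv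
    rcases hv with hv | hv | hv
    · rw [hpa v hv, hai]; exact (L.walk i).start_mem_support
    · exact hw v hv
    · rw [hpb v hv, hbi]; exact (L.walk i).end_mem_support
  choose a ha b hb w hw using hlift
  exact ⟨⟨a, b, w, ha, hb, fun i j hij v hvi hvj =>
    L.pairwise_disjoint hij (hw i v hvi) (hw j v hvj)⟩⟩

end Contraction

lemma separates_inter_of_edgeSet_eq_empty (hG : G.edgeSet = ∅) (A B : Set V) :
    G.Separates A B (A ∩ B) := by
  intro a ha b hb w
  cases w with
  | nil => exact ⟨a, ⟨ha, hb⟩, by simp⟩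
  | cons h _ => exact absurd (G.mem_edgeSet.mpr h) (by simp [hG])

lemma nonempty_linkage_of_le_ncard_inter [Finite V] {A B : Set V} {k : ℕ}
    (h : k ≤ (A ∩ B).ncard) : Nonempty (G.Linkage A B k) := by
  obtain ⟨e⟩ : Nonempty (Fin (A ∩ B).ncard ≃ ↥(A ∩ B)) :=
    Finite.card_eq.mp (by simp [Nat.card_coe_set_eq])
  let f := (Fin.castLEEmb h).trans e.toEmbedding
  refine ⟨⟨fun i => f i, fun i => f i, fun _ => .nil, fun i => (f i).2.1, fun i => (f i).2.2,
    fun i j hij => ?_⟩⟩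
  simpa using fun h => hij (f.injective (Subtype.ext h)).symm

/-- Menger's theorem, by induction on the number of edges: either the contraction `G / xy` of an
edge still needs `k` vertices to separate `A` from `B`, and its linkage lifts, or a smaller
separator of `G / xy` pulls back to an `A`–`B` separator `X ∋ x, y` of `G` with `|X| ≤ k`, and
linkages of `G - xy` from `A` and from `B` onto `X` are spliced together. -/
theorem menger [Finite V] {A B : Set V} {k : ℕ} (h : ∀ S, G.Separates A B S → k ≤ S.ncard) :
    Nonempty (G.Linkage A B k) := by
  classical
  induction hn : G.edgeSet.ncard using Nat.strong_induction_on generalizing G A B with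
  | _ n ih =>
  obtain hE | ⟨e, he⟩ := G.edgeSet.eq_empty_or_nonempty
  · exact nonempty_linkage_of_le_ncard_inter (h _ (separates_inter_of_edgeSet_eq_empty hE A B))
  induction e using Sym2.ind with
  | _ x y =>
  have hxy : G.Adj x y := he
  by_cases hc : ∀ S, (G.map (Function.update id y x)).Separates
      (Function.update id y x '' A) (Function.update id y x '' B) S → k ≤ S.ncard
  · obtain ⟨L⟩ := ih _ (hn ▸ ncard_edgeSet_map_update_lt hxy) hc rfl
    exact L.nonempty_of_map_update hxy
  push Not at hc
  obtain ⟨S, hS, hSk⟩ := hc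
  set X := Function.update id y x ⁻¹' S
  have hX : G.Separates A B X := hS.of_map _
  have hxS : x ∈ S := by
    by_contra hxS
    exact (h X hX).not_gt
      ((Set.ncard_le_ncard (Function.preimage_update_id_subset hxS)).trans_lt hSk)
  have hXk : X.ncard ≤ k := (Set.ncard_le_ncard (Function.preimage_update_id_subset_insert S)).trans
    ((Set.ncard_insert_le _ _).trans hSk)
  have hx : x ∈ X := by simpa [X, Function.update_of_ne hxy.ne] using hxS
  have hy : y ∈ X := by simpa [X] using hxS
  have hlt : (G.deleteEdges {s(x, y)}).edgeSet.ncard < n := by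
    rw [edgeSet_deleteEdges, ← hn]
    exact Set.ncard_sdiff_singleton_lt_of_mem hxy (Set.toFinite _)
  obtain ⟨L⟩ := ih _ hlt (fun T hT => h T (hX.of_deleteEdges hxy.ne hx hy hT)) rfl
  obtain ⟨R⟩ := ih _ hlt (fun T hT => h T (hX.symm.of_deleteEdges hxy.ne hx hy hT).symm) rfl
  obtain ⟨L, hL⟩ := L.exists_isTight
  obtain ⟨R, hR⟩ := R.exists_isTight
  obtain ⟨M⟩ := (hX.anti (deleteEdges_le _)).nonempty_linkage_of_isTight hXk hL hR
  exact ⟨M.mapLe (deleteEdges_le _)⟩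

lemma Walk.notMem_support_of_deleteIncidenceSet {x a b : V}
    (w : (G.deleteIncidenceSet x).Walk a b) (ha : a ≠ x) : x ∉ w.support := by
  induction w with
  | nil => simpa using ha.symm
  | cons h _ ih =>
    rw [deleteIncidenceSet_adj] at h
    simpa [ha.symm] using ih h.2.2

lemma Walk.exists_walk_deleteIncidenceSet {x a b : V} (w : G.Walk a b) (hx : x ∉ w.support) :
    ∃ w' : (G.deleteIncidenceSet x).Walk a b, w'.support = w.support := by
  refine ⟨w.transfer _ fun e he => ?_, w.support_transfer _⟩
  rw [edgeSet_deleteIncidenceSet]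
  exact ⟨w.edges_subset_edgeSet he, fun hxe => hx (Walk.mem_support_of_mem_edges he hxe.2)⟩

theorem isFan_of_forall_not_separates [Finite V] {H : SimpleGraph V} {x : V} {Y : Set V}
    {k : ℕ} (hxY : x ∉ Y) (h : ∀ S, x ∉ S → S.ncard < k → ¬ H.Separates {x} Y S) :
    IsFan H k x Y := by
  classical
  have hsep : ∀ S, (H.deleteIncidenceSet x).Separates (H.neighborSet x) Y S → k ≤ S.ncard := by
    intro S hS
    by_contra! hSk
    refine h (S \ {x}) (by simp) ((Set.ncard_le_ncard Set.sdiff_subset).trans_lt hSk) ?_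
    rintro _ rfl y hy w
    have hp := w.bypass_isPath
    cases hw : w.bypass with
    | nil => exact absurd hy hxY
    | cons hxc q =>
      rw [hw, Walk.cons_isPath_iff] at hp
      obtain ⟨q', hq'⟩ := q.exists_walk_deleteIncidenceSet hp.2
      obtain ⟨s, hs, hsq⟩ := hS _ hxc _ hy q'
      rw [hq'] at hsq
      refine ⟨s, ⟨hs, fun hsx => hp.2 (hsx ▸ hsq)⟩, w.support_bypass_subset_support ?_⟩
      rw [hw]
      exact List.mem_cons_of_mem _ hsq
  obtain ⟨L⟩ := menger hsep
  obtain ⟨L, hL⟩ := L.exists_isTight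
  have hsrc : ∀ i, H.Adj x (L.src i) := L.src_mem
  have hxL : ∀ i, x ∉ (L.walk i).support := fun i =>
    (L.walk i).notMem_support_of_deleteIncidenceSet (hsrc i).ne.symm
  refine ⟨L.dst, fun i => ((L.walk i).mapLe (deleteIncidenceSet_le H x)).cons (hsrc i),
    L.dst_injective, L.dst_mem, fun i => ?_, fun i v hv hvx hvy hvY => ?_,
    fun i j hij v hvi hvj => ?_⟩
  · exact ((Walk.isPath_mapLe _).mpr (hL i).1).cons (by simpa using hxL i)
  · simp only [Walk.support_cons, Walk.support_mapLe_eq_support, List.mem_cons] at hv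
    exact hvy ((hL i).2 v (hv.resolve_left hvx) hvY)
  · simp only [Walk.support_cons, Walk.support_mapLe_eq_support, List.mem_cons] at hvi hvj
    rcases hvi with rfl | hvi
    · rfl
    · exact (L.pairwise_disjoint hij hvi (hvj.resolve_left fun hvx => hxL i (hvx ▸ hvi))).elim

lemma not_separates_of_reachable {A B S : Set V} {a b : V} (ha : a ∈ A) (hb : b ∈ B)
    (haS : a ∉ S) (hbS : b ∉ S) (h : (G.induce Sᶜ).Reachable ⟨a, haS⟩ ⟨b, hbS⟩) :
    ¬ G.Separates A B S := by
  intro hsep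
  obtain ⟨w⟩ := h
  have hw : ∀ v ∈ (w.map (Embedding.induce Sᶜ).toHom).support, v ∉ S := by
    simp only [Walk.support_map, List.mem_map]
    rintro _ ⟨z, -, rfl⟩
    exact z.2
  obtain ⟨s, hs, hsw⟩ := hsep a ha b hb (w.map (Embedding.induce Sᶜ).toHom)
  exact hw s hsw hs

end SimpleGraph

section Partition

variable {W ι : Type*} {π : W → ι} {m : ℕ} {S : Set W}

lemma eq_of_le_ncard_inter_fiber [Finite W] (hSm : S.ncard < 2 * m) {i j : ι}
    (hi : m ≤ (S ∩ π ⁻¹' {i}).ncard) (hj : m ≤ (S ∩ π ⁻¹' {j}).ncard) : i = j := by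
  by_contra hij
  have hdisj : Disjoint (S ∩ π ⁻¹' {i}) (S ∩ π ⁻¹' {j}) :=
    Set.disjoint_left.mpr fun w hwi hwj => hij (hwi.2.symm.trans hwj.2)
  have := Set.ncard_union_eq hdisj
  have : (S ∩ π ⁻¹' {i} ∪ S ∩ π ⁻¹' {j}).ncard ≤ S.ncard :=
    Set.ncard_le_ncard (Set.union_subset Set.inter_subset_left Set.inter_subset_left)
  omega

lemma exists_mem_notMem_ncard_inter_fiber_lt [Finite W] {Y : Set W}
    (hY : ∀ y ∈ Y, (Y ∩ π ⁻¹' {π y}).ncard ≤ m) (hSY : S.ncard < Y.ncard)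
    (hSm : S.ncard < 2 * m) : ∃ y ∈ Y, y ∉ S ∧ (S ∩ π ⁻¹' {π y}).ncard < m := by
  by_contra! hbad
  obtain ⟨y₀, hy₀, hy₀S⟩ : ∃ y ∈ Y, y ∉ S := by
    by_contra! hYS
    exact (Set.ncard_le_ncard hYS).not_gt hSY
  have hsub : Y ⊆ (Y ∩ π ⁻¹' {π y₀}) ∪ (S \ π ⁻¹' {π y₀}) := by
    intro y hy
    by_cases hyb : π y = π y₀
    · exact Or.inl ⟨hy, hyb⟩
    by_cases hyS : y ∈ S
    · exact Or.inr ⟨hyS, hyb⟩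
    exact absurd (eq_of_le_ncard_inter_fiber hSm (hbad y hy hyS) (hbad y₀ hy₀ hy₀S)) hyb
  have := (Set.ncard_le_ncard hsub).trans (Set.ncard_union_le _ _)
  have := S.ncard_inter_add_ncard_sdiff_eq_ncard (π ⁻¹' {π y₀})
  have := hY y₀ hy₀
  have := hbad y₀ hy₀ hy₀S
  omega

lemma exists_reachable_ncard_inter_fiber_lt [Finite W] (H : SimpleGraph W) {x : W} (hxS : x ∉ S)
    (hS : S.ncard < m + {w | H.Adj x w ∧ π w ≠ π x}.ncard) (hSm : S.ncard < 2 * m) :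
    ∃ u, ∃ hu : u ∉ S, (S ∩ π ⁻¹' {π u}).ncard < m ∧
      (H.induce Sᶜ).Reachable ⟨x, hxS⟩ ⟨u, hu⟩ := by
  by_cases hx : (S ∩ π ⁻¹' {π x}).ncard < m
  · exact ⟨x, hxS, hx, .rfl⟩
  push Not at hx
  obtain ⟨w, ⟨hxw, hwx⟩, hwS⟩ : ∃ w ∈ {w | H.Adj x w ∧ π w ≠ π x}, w ∉ S := by
    by_contra! hN
    have := Set.ncard_le_ncard (t := S \ π ⁻¹' {π x}) fun w hw => ⟨hN w hw, hw.2⟩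
    have := S.ncard_inter_add_ncard_sdiff_eq_ncard (π ⁻¹' {π x})
    omega
  refine ⟨w, hwS, ?_, (SimpleGraph.induce_adj.mpr hxw).reachable⟩
  by_contra! hw
  exact hwx (eq_of_le_ncard_inter_fiber hSm hw hx)

lemma reachable_of_ncard_inter_fiber_lt (H : SimpleGraph W)
    (hpart : ∀ u v (hu : u ∉ S) (hv : v ∉ S), π u = π v → (S ∩ π ⁻¹' {π u}).ncard < m →
      (H.induce Sᶜ).Reachable ⟨u, hu⟩ ⟨v, hv⟩)
    (hcross : ∀ u v, π u ≠ π v →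
      ∃ u' v', H.Adj u' v' ∧ π u' = π u ∧ π v' = π v ∧ u' ∉ S ∧ v' ∉ S)
    {u v : W} (hu : u ∉ S) (hv : v ∉ S) (hum : (S ∩ π ⁻¹' {π u}).ncard < m)
    (hvm : (S ∩ π ⁻¹' {π v}).ncard < m) : (H.induce Sᶜ).Reachable ⟨u, hu⟩ ⟨v, hv⟩ := by
  by_cases huv : π u = π v
  · exact hpart u v hu hv huv hum
  obtain ⟨u', v', huv', hu', hv', hu'S, hv'S⟩ := hcross u v huv
  exact (hpart u u' hu hu'S hu'.symm hum).trans <|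
    (SimpleGraph.induce_adj.mpr huv').reachable.trans <|
      hpart v' v hv'S hv hv' (hv' ▸ hvm)

end Partition

lemma exists_mem_fst_notMem_snd_notMem {α : Type*} [Finite α] {E : Set (α × α)} {S : Set α}
    (h₁ : Set.InjOn Prod.fst E) (h₂ : Set.InjOn Prod.snd E)
    (h₁₂ : ∀ e ∈ E, ∀ e' ∈ E, e.1 ≠ e'.2) (hS : S.ncard < E.ncard) :
    ∃ e ∈ E, e.1 ∉ S ∧ e.2 ∉ S := by
  classical
  by_contra! h
  let f : α × α → α := fun e => if e.1 ∈ S then e.1 else e.2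
  refine (Set.ncard_le_ncard_of_injOn f (fun e he => ?_) (fun e he e' he' hf => ?_)).not_gt hS
  · by_cases h1 : e.1 ∈ S <;> simp [f, h1, h e he]
  · by_cases h1 : e.1 ∈ S <;> by_cases h1' : e'.1 ∈ S <;>
      simp only [f, h1, h1', if_true, if_false] at hf
    · exact h₁ he he' hf
    · exact absurd hf (h₁₂ e he e' he')
    · exact absurd hf.symm (h₁₂ e' he' e he)
    · exact h₂ he he' hf

section PartitionedGraph

variable {V ι : Type*} {G : SimpleGraph V} {part : V → ι}

lemma eq_of_adj_of_adj_of_part_eq {v : V}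
    (hout : ∃ w₁ w₂, part w₁ ≠ part w₂ ∧ ∀ w, G.Adj v w → part w ≠ part v → w = w₁ ∨ w = w₂)
    {w w' : V} (hw : G.Adj v w) (hw' : G.Adj v w') (hpart : part w = part w')
    (hne : part w ≠ part v) : w = w' := by
  obtain ⟨w₁, w₂, h12, hout⟩ := hout
  rcases hout w hw hne with rfl | rfl <;> rcases hout w' hw' (hpart ▸ hne) with rfl | rfl
  exacts [rfl, absurd hpart h12, absurd hpart.symm h12, rfl]

lemma exists_induce_adj_notMem [Finite V] {s : Set V}
    (hnb : ∀ v w w', G.Adj v w → G.Adj v w' → part w = part w' → part w ≠ part v → w = w')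
    {i j : ι} (hij : i ≠ j) (hi : part ⁻¹' {i} ⊆ s) (hj : part ⁻¹' {j} ⊆ s) {S : Set s}
    (hS : S.ncard < {e : V × V | G.Adj e.1 e.2 ∧ part e.1 = i ∧ part e.2 = j}.ncard) :
    ∃ u v : s, (G.induce s).Adj u v ∧ part u = i ∧ part v = j ∧ u ∉ S ∧ v ∉ S := by
  set E := {e : V × V | G.Adj e.1 e.2 ∧ part e.1 = i ∧ part e.2 = j}
  have h₁ : Set.InjOn Prod.fst E := fun e ⟨he, he₁, he₂⟩ e' ⟨he', _, he₂'⟩ h =>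
    Prod.ext h (hnb _ _ _ he (h ▸ he') (he₂.trans he₂'.symm) (by rw [he₁, he₂]; exact hij.symm))
  have h₂ : Set.InjOn Prod.snd E := fun e ⟨he, he₁, he₂⟩ e' ⟨he', he₁', _⟩ h =>
    Prod.ext (hnb _ _ _ he.symm (h ▸ he'.symm) (he₁.trans he₁'.symm) (by rw [he₁, he₂]; exact hij))
      h
  obtain ⟨e, ⟨he, he₁, he₂⟩, h₁, h₂⟩ := exists_mem_fst_notMem_snd_notMem (S := Subtype.val '' S)
    h₁ h₂ (fun e ⟨_, he₁, _⟩ e' ⟨_, _, he₂'⟩ h => hij (he₁.symm.trans (h ▸ he₂')))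
    (by rwa [Set.ncard_image_of_injective _ Subtype.val_injective])
  exact ⟨⟨e.1, hi he₁⟩, ⟨e.2, hj he₂⟩, he, he₁, he₂, fun h => h₁ ⟨_, h, rfl⟩,
    fun h => h₂ ⟨_, h, rfl⟩⟩

lemma reachable_induce_induce_of_subset [Finite V] {s t : Set V} (hts : t ⊆ s) {m : ℕ}
    (hconn : ∀ D : Set t, D.ncard < m → ((G.induce t).induce Dᶜ).Connected)
    {S : Set s} (hS : (S ∩ Subtype.val ⁻¹' t).ncard < m) {u v : s} (hut : (u : V) ∈ t)
    (hvt : (v : V) ∈ t) (hu : u ∉ S) (hv : v ∉ S) :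
    ((G.induce s).induce Sᶜ).Reachable ⟨u, hu⟩ ⟨v, hv⟩ := by
  set D : Set t := Set.inclusion hts ⁻¹' S
  have hD : D.ncard < m := (Set.ncard_le_ncard_of_injOn (t := S ∩ Subtype.val ⁻¹' t)
    (Set.inclusion hts) (fun z hz => ⟨hz, z.2⟩) (Set.inclusion_injective hts).injOn).trans_lt hS
  let φ : (G.induce t).induce Dᶜ →g (G.induce s).induce Sᶜ :=
    ⟨fun z => ⟨Set.inclusion hts z, z.2⟩, fun h => h⟩
  exact ((hconn D hD).preconnected ⟨⟨u, hut⟩, hu⟩ ⟨⟨v, hvt⟩, hv⟩).map φ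

lemma ncard_neighborSet_induce [Finite V] {s : Set V} {x : s} {m : ℕ}
    (hs : part ⁻¹' {part x} ⊆ s) (hreg : {w | G.Adj x w ∧ part w = part x}.ncard = m) :
    ((G.induce s).neighborSet x).ncard =
      m + {w : s | (G.induce s).Adj x w ∧ part w ≠ part x}.ncard := by
  have hsame : {w : s | (G.induce s).Adj x w ∧ part w = part x}.ncard = m := by
    rw [← hreg, ← Set.ncard_image_of_injective _ Subtype.val_injective]
    congr 1
    ext w
    constructor
    · rintro ⟨w, hw, rfl⟩
      exact hw
    · rintro ⟨hxw, hw⟩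
      exact ⟨⟨w, hs hw⟩, ⟨hxw, hw⟩, rfl⟩
  rw [← hsame, ← Set.ncard_union_eq (Set.disjoint_left.mpr fun w h h' => h'.2 h.2)]
  congr 1
  ext w
  simp only [SimpleGraph.mem_neighborSet, Set.mem_union, Set.mem_ofPred_eq]
  tauto

lemma ncard_adj_part_ne_le_two {s : Set V} {x : s}
    (hout : ∃ w₁ w₂, ∀ w, G.Adj x w → part w ≠ part x → w = w₁ ∨ w = w₂) :
    {w : s | (G.induce s).Adj x w ∧ part w ≠ part x}.ncard ≤ 2 := by
  obtain ⟨w₁, w₂, hout⟩ := hout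
  rw [← Set.ncard_image_of_injective _ Subtype.val_injective]
  refine (Set.ncard_le_ncard (t := {w₁, w₂}) ?_).trans ((Set.ncard_insert_le _ _).trans (by simp))
  rintro _ ⟨w, ⟨hxw, hw⟩, rfl⟩
  exact hout w hxw hw

end PartitionedGraph

theorem stmt_1_general {V : Type*} [Fintype V] (G : SimpleGraph V)
    (p q m : ℕ) (hm : 4 ≤ m)
    (part : V → Fin p)
    (hreg : ∀ v : V, {w : V | G.Adj v w ∧ part w = part v}.ncard = m)
    (hconn : ∀ i : Fin p, IsKConnected m (G.induce {v : V | part v = i}))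
    (hout : ∀ v : V, ∃ w₁ w₂ : V, w₁ ≠ w₂ ∧ G.Adj v w₁ ∧ G.Adj v w₂ ∧
      part w₁ ≠ part v ∧ part w₂ ≠ part v ∧ part w₁ ≠ part w₂ ∧
      (∀ w : V, G.Adj v w → part w ≠ part v → w = w₁ ∨ w = w₂))
    (hcross : ∀ i j : Fin p, i ≠ j →
      {e : V × V | G.Adj e.1 e.2 ∧ part e.1 = i ∧ part e.2 = j}.ncard * (p - 1) = 2 * q ∧
      m + 2 ≤ {e : V × V | G.Adj e.1 e.2 ∧ part e.1 = i ∧ part e.2 = j}.ncard)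
    (I : Finset (Fin p))
    (x : ↥{v : V | part v ∈ I}) (k : ℕ)
    (hk : ((G.induce {v : V | part v ∈ I}).neighborSet x).ncard = k)
    (Y : Set ↥{v : V | part v ∈ I}) (hxY : x ∉ Y) (hYcard : Y.ncard = k)
    (hYpart : ∀ j ∈ I, {y : ↥{v : V | part v ∈ I} | y ∈ Y ∧ part (y : V) = j}.ncard ≤ m) :
    IsFan (G.induce {v : V | part v ∈ I}) k x Y := by
  have hfiber (u : ↥{v : V | part v ∈ I}) : part ⁻¹' {part (u : V)} ⊆ {v : V | part v ∈ I} :=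
    fun v (hv : part v = part u) => show part v ∈ I from hv ▸ u.2
  have hnb (v w w' : V) : G.Adj v w → G.Adj v w' → part w = part w' → part w ≠ part v → w = w' := by
    obtain ⟨w₁, w₂, -, -, -, -, -, h₁₂, hv⟩ := hout v
    exact eq_of_adj_of_adj_of_part_eq ⟨w₁, w₂, h₁₂, hv⟩
  have hdeg := ncard_neighborSet_induce (hfiber x) (hreg x)
  have hout₂ : _ ≤ 2 := ncard_adj_part_ne_le_two (s := {v : V | part v ∈ I}) (x := x)
    (by obtain ⟨w₁, w₂, -, -, -, -, -, -, hx⟩ := hout x; exact ⟨w₁, w₂, hx⟩)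
  refine SimpleGraph.isFan_of_forall_not_separates hxY fun S hxS hSk => ?_
  have hSm : S.ncard < 2 * m := by omega
  obtain ⟨u, huS, hu, hxu⟩ := exists_reachable_ncard_inter_fiber_lt
    (π := fun w : ↥{v : V | part v ∈ I} => part w) (G.induce _) hxS (by omega) hSm
  obtain ⟨y, hyY, hyS, hy⟩ := exists_mem_notMem_ncard_inter_fiber_lt
    (π := fun w : ↥{v : V | part v ∈ I} => part w) (fun y _ => hYpart _ y.2) (by omega) hSm
  refine SimpleGraph.not_separates_of_reachable rfl hyY hxS hyS (hxu.trans ?_)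
  refine reachable_of_ncard_inter_fiber_lt _ (fun a b ha hb hab ham => ?_) (fun a b hab => ?_)
    huS hyS hu hy
  · exact reachable_induce_induce_of_subset (hfiber a) (hconn _).2 ham rfl hab.symm ha hb
  · exact exists_induce_adj_notMem hnb hab (hfiber a) (hfiber b)
      (by have := (hcross _ _ hab).2; omega)

/-- with the same partitioned-graph set-up, if `H` is induced on the union of
`l ≥ 2` parts, `x ∈ V(H)` has degree `k` in `H`, and `Y ⊆ V(H) \ {x}` with `|Y| = k` and
`|Y ∩ V_j| ≤ m` for every part, then there is a `k`-fan in `H` from `x` to `Y`. -/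
theorem stmt_1 {V : Type*} [Fintype V] (G : SimpleGraph V)
    (p q m : ℕ) (hm : 4 ≤ m) (hp : 3 ≤ p)
    (part : V → Fin p)
    (hsize : ∀ i : Fin p, {v : V | part v = i}.ncard = q)
    (hreg : ∀ v : V, {w : V | G.Adj v w ∧ part w = part v}.ncard = m)
    (hconn : ∀ i : Fin p, IsKConnected m (G.induce {v : V | part v = i}))
    (hout : ∀ v : V, ∃ w₁ w₂ : V, w₁ ≠ w₂ ∧ G.Adj v w₁ ∧ G.Adj v w₂ ∧
      part w₁ ≠ part v ∧ part w₂ ≠ part v ∧ part w₁ ≠ part w₂ ∧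
      (∀ w : V, G.Adj v w → part w ≠ part v → w = w₁ ∨ w = w₂))
    (hcross : ∀ i j : Fin p, i ≠ j →
      {e : V × V | G.Adj e.1 e.2 ∧ part e.1 = i ∧ part e.2 = j}.ncard * (p - 1) = 2 * q ∧
      m + 2 ≤ {e : V × V | G.Adj e.1 e.2 ∧ part e.1 = i ∧ part e.2 = j}.ncard)
    (I : Finset (Fin p)) (hI : 2 ≤ I.card)
    (x : ↥{v : V | part v ∈ I}) (k : ℕ)
    (hk : ((G.induce {v : V | part v ∈ I}).neighborSet x).ncard = k)
    (Y : Set ↥{v : V | part v ∈ I}) (hxY : x ∉ Y) (hYcard : Y.ncard = k)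
    (hYpart : ∀ j ∈ I, {y : ↥{v : V | part v ∈ I} | y ∈ Y ∧ part (y : V) = j}.ncard ≤ m) :
    IsFan (G.induce {v : V | part v ∈ I}) k x Y :=
  stmt_1_general G p q m hm part hreg hconn hout hcross I x k hk Y hxY hYcard hYpart
end

section
/- Let n ≥ 3 and, for 1 ≤ i ≤ n, let S_{n−1}²[i] be the subgraph of the split-star network S_n² induced by the permutations whose value in the n-th position equals i. Then any two vertices lying in different copies S_{n−1}²[i] and S_{n−1}²[j] (i ≠ j) have at most one common outside neighbour. -/
/-!
The transpositions in the connection set are involutions, so the outside neighbours of `u` are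
among `u(1 n)` and `u(2 n)`. Two distinct common outside neighbours of `u` and `v` would force
`{u(1 n), u(2 n)} = {v(1 n), v(2 n)}`; as `u ≠ v` this means `u(1 n) = v(2 n)` and
`u(2 n) = v(1 n)`, i.e. that the transpositions `(1 n)` and `(2 n)` commute, which they do not.
-/

def cayleyGraph {G : Type*} [Group G] (S : Set G) : SimpleGraph G :=
  SimpleGraph.fromRel (fun x y => ∃ s ∈ S, y = x * s)

/-- The split-star network `S_n²`: the Cayley graph of `Sym(n)` (permutations of the `n`
positions `0, …, n-1`, written as words) with connection set
`{(1 i) : 2 ≤ i ≤ n} ∪ {(2 i) : 3 ≤ i ≤ n}` (in 1-based notation). -/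
def splitStar (n : ℕ) (hn : 3 ≤ n) : SimpleGraph (Equiv.Perm (Fin n)) :=
  cayleyGraph ({σ | ∃ i : Fin n, 1 ≤ (i : ℕ) ∧ σ = Equiv.swap ⟨0, by omega⟩ i} ∪
    {σ | ∃ i : Fin n, 2 ≤ (i : ℕ) ∧ σ = Equiv.swap ⟨1, by omega⟩ i})

theorem cayleyGraph_exists_eq_mul_of_adj {G : Type*} [Group G] {S : Set G}
    (hS : ∀ s ∈ S, s * s = 1) {u w : G} (h : (cayleyGraph S).Adj u w) : ∃ s ∈ S, w = u * s := by
  obtain ⟨-, ⟨s, hs, rfl⟩ | ⟨s, hs, rfl⟩⟩ := SimpleGraph.fromRel_adj _ _ _ |>.mp h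
  · exact ⟨s, hs, rfl⟩
  · exact ⟨s, hs, by rw [mul_assoc, hS s hs, mul_one]⟩

theorem subsingleton_mul_pair_inter_mul_pair {G : Type*} [Group G] {u v a b : G} (huv : u ≠ v)
    (hab : a * b⁻¹ ≠ b * a⁻¹) : ({u * a, u * b} ∩ {v * a, v * b} : Set G).Subsingleton := by
  have hua : u * a ≠ v * a := fun h => huv (mul_right_cancel h)
  have hub : u * b ≠ v * b := fun h => huv (mul_right_cancel h)
  by_cases hcross : u * a = v * b
  · have hba : u * b ≠ v * a := fun h => hab <| mul_left_cancel (a := u) <| by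
      rw [← mul_assoc, ← mul_assoc, hcross, h, mul_inv_cancel_right, mul_inv_cancel_right]
    refine Set.Subsingleton.anti (t := {u * a}) Set.subsingleton_singleton ?_
    rintro w ⟨hwu, hwv⟩
    rcases hwu with rfl | rfl
    · rfl
    · rcases hwv with h | h <;> contradiction
  · refine Set.Subsingleton.anti (t := {u * b}) Set.subsingleton_singleton ?_
    rintro w ⟨hwu, hwv⟩
    rcases hwu with rfl | rfl
    · rcases hwv with h | h <;> contradiction
    · rfl

theorem Equiv.swap_mul_swap_ne_swap_mul_swap {α : Type*} [DecidableEq α] {a b c : α}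
    (hab : a ≠ b) (hac : a ≠ c) (hbc : b ≠ c) : swap a c * swap b c ≠ swap b c * swap a c := by
  intro h
  have hc := congrArg (· c) h
  simp only [Perm.mul_apply, swap_apply_right, swap_apply_of_ne_of_ne hab.symm hbc,
    swap_apply_of_ne_of_ne hab hac] at hc
  exact hab hc.symm

theorem splitStar_eq_mul_swap_of_adj_of_apply_ne {n : ℕ} {hn : 3 ≤ n} {u w : Equiv.Perm (Fin n)}
    {m : Fin n} (h0m : (⟨0, by omega⟩ : Fin n) ≠ m) (h1m : (⟨1, by omega⟩ : Fin n) ≠ m)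
    (hadj : (splitStar n hn).Adj u w) (hwu : w m ≠ u m) :
    w = u * Equiv.swap ⟨0, by omega⟩ m ∨ w = u * Equiv.swap ⟨1, by omega⟩ m := by
  obtain ⟨s, hs, rfl⟩ := cayleyGraph_exists_eq_mul_of_adj
    (by rintro s (⟨i, -, rfl⟩ | ⟨i, -, rfl⟩) <;> exact Equiv.swap_mul_self _ _) hadj
  have hsm : s m ≠ m := fun h => hwu (by rw [Equiv.Perm.mul_apply, h])
  rcases hs with ⟨i, -, rfl⟩ | ⟨i, -, rfl⟩
  · obtain ⟨-, hm | rfl⟩ := Equiv.swap_apply_ne_self_iff.mp hsm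
    · exact absurd hm.symm h0m
    · exact .inl rfl
  · obtain ⟨-, hm | rfl⟩ := Equiv.swap_apply_ne_self_iff.mp hsm
    · exact absurd hm.symm h1m
    · exact .inr rfl

/-- for `n ≥ 3`, splitting `S_n²` into copies `S_{n-1}²[i]` according to the
value in the `n`-th position, any two vertices lying in different copies have at most one
common outside neighbour. -/
theorem stmt_8 (n : ℕ) (hn : 3 ≤ n)
    (u v : Equiv.Perm (Fin n))
    (huv : u ⟨n - 1, by omega⟩ ≠ v ⟨n - 1, by omega⟩) :
    {w : Equiv.Perm (Fin n) |
      (splitStar n hn).Adj u w ∧ w ⟨n - 1, by omega⟩ ≠ u ⟨n - 1, by omega⟩ ∧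
      (splitStar n hn).Adj v w ∧ w ⟨n - 1, by omega⟩ ≠ v ⟨n - 1, by omega⟩}.ncard ≤ 1 := by
  set m : Fin n := ⟨n - 1, by omega⟩
  have h01 : (⟨0, by omega⟩ : Fin n) ≠ ⟨1, by omega⟩ := by simp [Fin.ext_iff]
  have h0m : (⟨0, by omega⟩ : Fin n) ≠ m := by simp [m, Fin.ext_iff]; omega
  have h1m : (⟨1, by omega⟩ : Fin n) ≠ m := by simp [m, Fin.ext_iff]; omega
  rw [Set.ncard_le_one_iff_subsingleton]
  refine (subsingleton_mul_pair_inter_mul_pair (ne_of_apply_ne (· m) huv)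
    (a := Equiv.swap ⟨0, by omega⟩ m) (b := Equiv.swap ⟨1, by omega⟩ m) ?_).anti ?_
  · simpa only [Equiv.swap_inv] using Equiv.swap_mul_swap_ne_swap_mul_swap h01 h0m h1m
  · rintro w ⟨hu, hwu, hv, hwv⟩
    exact ⟨splitStar_eq_mul_swap_of_adj_of_apply_ne h0m h1m hu hwu,
      splitStar_eq_mul_swap_of_adj_of_apply_ne h0m h1m hv hwv⟩
end
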